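/- arXiv:1312.3590 — 3 statements merged into one kernel-verified Lean document; each statement's English description precedes it below -/
import Mathlib

section
/- Let N ≥ 1 and let c_1, …, c_N be positive integers. Suppose t_1, …, t_N are real numbers, all greater than 1, satisfying t_k = c_k + 1/t_{k+1} for 1 ≤ k < N and t_N = c_N + 1/t_1 (i.e. θ := t_1 has purely periodic continued fraction expansion [c_1, …, c_N, c_1, …, c_N, …]). Let g = !![c_1, 1; 1, 0] * !![c_2, 1; 1, 0] * ⋯ * !![c_N, 1; 1, 0], written g = !![a, b; c, d] with integer entries. Then cθ + d > 0 and (aθ + b)/(cθ + d) = θ; that is, θ is fixed by the Möbius action of the matrix g ∈ GL_2(ℤ) built from one period of its continued fraction expansion. -/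
/-!
The matrix `!![a, 1; 1, 0]` sends the column `(y, 1)` to `y • (a + 1/y, 1)`. Along the
recurrence `t k = c k + 1 / t (k + 1)` this telescopes: the product `g` over one period sends
`(θ, 1)` to `μ • (θ, 1)` with `μ = t 1 ⋯ t (N-1) t 0 > 0`. Reading off the two coordinates,
`μ` is the denominator `c θ + d` and `θ` is fixed by the Möbius action of `g`.
-/

/-- The product of the matrices `!![c k, 1; 1, 0]` over one period of a
continued fraction expansion. -/
def cfMatrixProd (N : ℕ) (c : Fin N → ℤ) : Matrix (Fin 2) (Fin 2) ℤ :=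
  (List.ofFn fun k : Fin N => !![c k, 1; 1, 0]).prod

open Matrix

section Field

variable {K : Type*} [Field K]

theorem cfStep_mulVec {a x y : K} (hy : y ≠ 0) (hx : x = a + 1 / y) :
    !![a, 1; 1, 0] *ᵥ ![y, 1] = y • ![x, 1] := by
  subst hx
  ext i
  fin_cases i
  · simp
    field_simp
  · simp

theorem cfStep_prod_mulVec (a s : ℕ → K) (hs : ∀ k, s (k + 1) ≠ 0)
    (hrec : ∀ k, s k = a k + 1 / s (k + 1)) (n : ℕ) :
    (List.ofFn fun k : Fin n => !![a k, 1; 1, 0]).prod *ᵥ ![s n, 1] =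
      (∏ k ∈ Finset.range n, s (k + 1)) • ![s 0, 1] := by
  induction n with
  | zero => simp
  | succ n ih =>
    rw [List.ofFn_succ', List.prod_concat]
    simp only [Fin.val_castSucc, Fin.val_last]
    rw [← mulVec_mulVec, cfStep_mulVec (hs n) (hrec n), mulVec_smul, ih, smul_smul,
      Finset.prod_range_succ, mul_comm]

theorem mobius_eq_of_mulVec_eq_smul {g : Matrix (Fin 2) (Fin 2) K} {θ μ : K} (hμ : μ ≠ 0)
    (h : g *ᵥ ![θ, 1] = μ • ![θ, 1]) :
    g 1 0 * θ + g 1 1 = μ ∧ (g 0 0 * θ + g 0 1) / (g 1 0 * θ + g 1 1) = θ := by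
  have h0 := congrFun h 0
  have h1 := congrFun h 1
  simp only [mulVec, dotProduct, Fin.sum_univ_two, cons_val_zero, cons_val_one,
    cons_val_fin_one, mul_one, Pi.smul_apply, smul_eq_mul] at h0 h1
  refine ⟨h1, ?_⟩
  rw [h0, h1, mul_div_cancel_left₀ _ hμ]

end Field

theorem cfMatrixProd_map_intCast {R : Type*} [Ring R] (N : ℕ) (c : Fin N → ℤ) :
    (cfMatrixProd N c).map (Int.cast : ℤ → R) =
      (List.ofFn fun k : Fin N => !![(c k : R), 1; 1, 0]).prod := by
  change (Int.castRingHom R).mapMatrix _ = _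
  rw [cfMatrixProd, map_list_prod, List.map_ofFn]
  congr 1
  rw [List.ofFn_inj]
  funext k
  ext i j
  fin_cases i <;> fin_cases j <;> simp

open Fin.NatCast in
theorem exists_cfMatrixProd_mulVec_eq_smul (N : ℕ) [NeZero N] (c : Fin N → ℤ)
    (t : Fin N → ℝ) (ht : ∀ k, 0 < t k)
    (hrec : ∀ k : Fin N, t k = (c k : ℝ) + 1 / t (k + 1)) :
    ∃ μ : ℝ, 0 < μ ∧ (cfMatrixProd N c).map (Int.cast : ℤ → ℝ) *ᵥ ![t 0, 1] = μ • ![t 0, 1] := by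
  -- extend `c` and `t` `N`-periodically to `ℕ` through the cast `ℕ → Fin N`
  have key := cfStep_prod_mulVec (fun k : ℕ => (c k : ℝ)) (fun k : ℕ => t k)
    (fun k => (ht _).ne') (fun k => by simpa using hrec k) N
  refine ⟨∏ k ∈ Finset.range N, t ((k + 1 : ℕ) : Fin N), Finset.prod_pos fun k _ => ht _, ?_⟩
  rw [cfMatrixProd_map_intCast]
  simpa using key

theorem periodic_continued_fraction_fixed_point_general
    (N : ℕ) [NeZero N] (c : Fin N → ℤ)
    (t : Fin N → ℝ) (ht : ∀ k, 1 < t k)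
    (hrec : ∀ k : Fin N, t k = (c k : ℝ) + 1 / t (k + 1)) :
    0 < (cfMatrixProd N c 1 0 : ℝ) * t 0 + (cfMatrixProd N c 1 1 : ℝ) ∧
    ((cfMatrixProd N c 0 0 : ℝ) * t 0 + (cfMatrixProd N c 0 1 : ℝ)) /
      ((cfMatrixProd N c 1 0 : ℝ) * t 0 + (cfMatrixProd N c 1 1 : ℝ)) = t 0 := by
  obtain ⟨μ, hμ, hfix⟩ := exists_cfMatrixProd_mulVec_eq_smul N c t
    (fun k => one_pos.trans (ht k)) hrec
  obtain ⟨hden, hmob⟩ := mobius_eq_of_mulVec_eq_smul hμ.ne' hfix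
  simp only [Matrix.map_apply] at hden hmob
  exact ⟨hden ▸ hμ, hmob⟩

/-- If `θ = t 0` has purely periodic continued fraction expansion
`[c 0, …, c (N-1), c 0, …]`, then `θ` is fixed by the Möbius action of the
matrix `g = !![c 0,1;1,0] * ⋯ * !![c (N-1),1;1,0]` built from one period,
and the denominator `c·θ + d` is positive. -/
theorem periodic_continued_fraction_fixed_point
    (N : ℕ) [NeZero N] (hN : 1 ≤ N) (c : Fin N → ℤ) (hc : ∀ k, 0 < c k)
    (t : Fin N → ℝ) (ht : ∀ k, 1 < t k)
    (hrec : ∀ k : Fin N, t k = (c k : ℝ) + 1 / t (k + 1)) :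
    0 < (cfMatrixProd N c 1 0 : ℝ) * t 0 + (cfMatrixProd N c 1 1 : ℝ) ∧
    ((cfMatrixProd N c 0 0 : ℝ) * t 0 + (cfMatrixProd N c 0 1 : ℝ)) /
      ((cfMatrixProd N c 1 0 : ℝ) * t 0 + (cfMatrixProd N c 1 1 : ℝ)) = t 0 :=
  periodic_continued_fraction_fixed_point_general N c t ht hrec
end

section
/- Let θ ∈ ℝ be a quadratic irrationality: θ is irrational and satisfies Aθ² + Bθ + C = 0 for some integers A, B, C with A ≠ 0. Then there exists a matrix g = !![a, b; c, d] with integer entries, determinant ad − bc = 1, g ≠ 1 and g ≠ −1, such that cθ + d ≠ 0 and (aθ + b)/(cθ + d) = θ; i.e. θ is fixed by the Möbius action of a nontrivial element of SL_2(ℤ). -/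
/-!
If `θ` is an irrational root of `A X² + B X + C`, then the square root `2Aθ + B` of the
discriminant `D = B² - 4AC` is irrational, so `D` is a positive non-square and Pell's equation
`x² - D y² = 1` has a solution with `y ≠ 0`. Multiplication by `ε = x + y (2Aθ + B)` preserves
the lattice `ℤθ + ℤ`, sending `θ ↦ (x - By) θ - 2Cy` and `1 ↦ 2Ay θ + (x + By)`; the matrix `g`
of these two rows moves `θ` to `εθ / ε = θ`, has determinant the norm `x² - D y² = 1` of `ε`,
and is not `±1` because its lower-left entry `2Ay` is nonzero.
-/

namespace Irrational

variable {u : ℝ}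

theorem intCast_pos_of_sq_eq (hu : Irrational u) {D : ℤ} (h : u ^ 2 = D) : 0 < D := by
  have : (0 : ℝ) < u ^ 2 := sq_pos_of_ne_zero hu.ne_zero
  exact_mod_cast h ▸ this

theorem not_isSquare_of_sq_eq (hu : Irrational u) {D : ℤ} (h : u ^ 2 = D) : ¬IsSquare D := by
  rintro ⟨k, rfl⟩
  have : u ^ 2 = (k : ℝ) ^ 2 := by rw [h]; push_cast; ring
  rcases sq_eq_sq_iff_eq_or_eq_neg.mp this with hk | hk
  · exact hu.ne_int k hk
  · exact hu.ne_int (-k) (by rw [hk]; push_cast; rfl)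

end Irrational

theorem sq_two_mul_add_eq_discrim {A B C : ℤ} {θ : ℝ} (h : (A : ℝ) * θ ^ 2 + B * θ + C = 0) :
    ((2 * A : ℤ) * θ + B : ℝ) ^ 2 = (discrim A B C : ℤ) := by
  rw [discrim]
  push_cast
  linear_combination 4 * (A : ℝ) * h

section pellMatrix

variable {R : Type*} [CommRing R]

def pellMatrix (A B C x y : R) : Matrix (Fin 2) (Fin 2) R :=
  !![x - B * y, -2 * C * y; 2 * A * y, x + B * y]

theorem det_pellMatrix (A B C x y : R) :
    (pellMatrix A B C x y).det = x ^ 2 - discrim A B C * y ^ 2 := by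
  rw [pellMatrix, Matrix.det_fin_two_of, discrim]
  ring

theorem pellMatrix_ne_one {A B C x y : R} [NoZeroDivisors R] [CharZero R] (hA : A ≠ 0)
    (hy : y ≠ 0) : pellMatrix A B C x y ≠ 1 := by
  intro h
  have : (2 * A * y : R) = 0 := congrFun (congrFun h 1) 0
  simp_all

theorem pellMatrix_ne_neg_one {A B C x y : R} [NoZeroDivisors R] [CharZero R] (hA : A ≠ 0)
    (hy : y ≠ 0) : pellMatrix A B C x y ≠ -1 := by
  intro h
  have : (2 * A * y : R) = (-1 : Matrix (Fin 2) (Fin 2) R) 1 0 := congrFun (congrFun h 1) 0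
  simp_all

end pellMatrix

theorem pellMatrix_mul_add_eq {S : Type*} [CommRing S] {A B C x y : ℤ} {θ : S}
    (h : (A : S) * θ ^ 2 + B * θ + C = 0) :
    let g := pellMatrix A B C x y
    (g 0 0 : S) * θ + g 0 1 = θ * ((g 1 0 : S) * θ + g 1 1) := by
  simp only [pellMatrix, Matrix.of_apply, Matrix.cons_val', Matrix.cons_val_zero,
    Matrix.cons_val_one, Matrix.empty_val', Matrix.cons_val_fin_one]
  push_cast
  linear_combination (-2 * (y : S)) * h

/-- Every quadratic irrationality `θ` is fixed by the Möbius action of a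
nontrivial matrix `g ∈ SL₂(ℤ)` (i.e. `g ≠ 1`, `g ≠ -1`, `det g = 1`). -/
theorem quadratic_irrational_fixed_by_sl2 (θ : ℝ) (hirr : Irrational θ)
    (A B C : ℤ) (hA : A ≠ 0) (hquad : (A : ℝ) * θ ^ 2 + (B : ℝ) * θ + (C : ℝ) = 0) :
    ∃ g : Matrix (Fin 2) (Fin 2) ℤ, g.det = 1 ∧ g ≠ 1 ∧ g ≠ -1 ∧
      ((g 1 0 : ℝ) * θ + (g 1 1 : ℝ)) ≠ 0 ∧
      ((g 0 0 : ℝ) * θ + (g 0 1 : ℝ)) / ((g 1 0 : ℝ) * θ + (g 1 1 : ℝ)) = θ := by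
  have h2A : 2 * A ≠ 0 := mul_ne_zero two_ne_zero hA
  have hsqrt : Irrational ((2 * A : ℤ) * θ + B) := (hirr.intCast_mul h2A).add_intCast B
  have hD := sq_two_mul_add_eq_discrim hquad
  obtain ⟨x, y, hpell, hy⟩ :=
    Pell.exists_of_not_isSquare (hsqrt.intCast_pos_of_sq_eq hD) (hsqrt.not_isSquare_of_sq_eq hD)
  have hden : ((2 * A * y : ℤ) : ℝ) * θ + ((x + B * y : ℤ) : ℝ) ≠ 0 :=
    ((hirr.intCast_mul (mul_ne_zero h2A hy)).add_intCast _).ne_zero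
  refine ⟨pellMatrix A B C x y, by rw [det_pellMatrix, hpell], pellMatrix_ne_one hA hy,
    pellMatrix_ne_neg_one hA hy, hden, (div_eq_iff hden).mpr (pellMatrix_mul_add_eq hquad)⟩
end

section
/- Let t, λ be real numbers with λ² = t·λ + 1 (so λ ≠ 0), and let N_1 = !![t, 1; 1, 0]. Define S = (1 + λ²)^(−1/2) • !![λ, 1; 1, −λ]. Then S is an orthogonal (real unitary) matrix: Sᵀ * S = 1; its columns are eigenvectors of the symmetric matrix N_1, and Sᵀ * N_1 * S = !![λ, 0; 0, −λ⁻¹]. In particular, when λ = cθ + d for g = !![a,b;c,d] with det g = −1 and g fixing θ under the Möbius action, this gives the unitary matrix of eigenvectors (the S̃-matrix) of the fusion matrix N_1 of the real multiplication anyon system, with eigenvalues λ and −1/λ. -/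
/-!
The columns `(λ, 1)` and `(1, -λ)` of `M = !![λ, 1; 1, -λ]` are eigenvectors of `N₁ = !![t, 1; 1, 0]`
for the two roots `λ` and `-λ⁻¹` of `x² = t x + 1`, and they are orthogonal of equal squared length
`1 + λ²`. Hence `N₁ M = M D` with `D = diag(λ, -λ⁻¹)` and `Mᵀ M = (1 + λ²) • 1`, so rescaling `M` by
`(1 + λ²)^(-1/2)` gives an orthogonal `S` with `Sᵀ N₁ S = D`.
-/

open Matrix

section CommRing

variable {R : Type*} [CommRing R] {t lam : R}

theorem ne_zero_of_sq_eq_mul_add_one [Nontrivial R] (hquad : lam ^ 2 = t * lam + 1) :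
    lam ≠ 0 := by
  rintro rfl
  simp at hquad

theorem fusion_mulVec_root (hquad : lam ^ 2 = t * lam + 1) :
    !![t, 1; 1, 0] *ᵥ ![lam, 1] = lam • ![lam, 1] := by
  simp only [cons_mulVec, empty_mulVec, vec2_dotProduct', smul_vec2, smul_eq_mul]
  exact vec2_eq (by linear_combination -hquad) (by ring)

theorem eigenvectors_transpose_mul_self (lam : R) :
    (!![lam, 1; 1, -lam] : Matrix (Fin 2) (Fin 2) R)ᵀ * !![lam, 1; 1, -lam] =
      (1 + lam ^ 2) • (1 : Matrix (Fin 2) (Fin 2) R) := by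
  ext i j
  fin_cases i <;> fin_cases j <;> simp [Matrix.mul_apply, Fin.sum_univ_two] <;> ring

end CommRing

section Field

variable {K : Type*} [Field K] {t lam : K}

theorem inv_eq_sub_of_sq_eq_mul_add_one (hquad : lam ^ 2 = t * lam + 1) : lam⁻¹ = lam - t := by
  have hlam := ne_zero_of_sq_eq_mul_add_one hquad
  field_simp
  linear_combination -hquad

theorem fusion_mulVec_neg_inv_root (hquad : lam ^ 2 = t * lam + 1) :
    !![t, 1; 1, 0] *ᵥ ![1, -lam] = (-lam⁻¹) • ![1, -lam] := by
  rw [inv_eq_sub_of_sq_eq_mul_add_one hquad]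
  simp only [cons_mulVec, empty_mulVec, vec2_dotProduct', smul_vec2, smul_eq_mul]
  exact vec2_eq (by ring) (by linear_combination -hquad)

theorem fusion_mul_eigenvectors (hquad : lam ^ 2 = t * lam + 1) :
    !![t, 1; 1, 0] * !![lam, 1; 1, -lam] = !![lam, 1; 1, -lam] * !![lam, 0; 0, -lam⁻¹] := by
  rw [inv_eq_sub_of_sq_eq_mul_add_one hquad, mul_fin_two, mul_fin_two]
  exact congrArg of (vec2_eq (vec2_eq (by linear_combination -hquad) (by ring))
    (vec2_eq (by ring) (by linear_combination -hquad)))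

end Field

theorem Matrix.transpose_smul_mul_mul_smul {n R : Type*} [Fintype n] [CommSemiring R] (c : R)
    (A B : Matrix n n R) : (c • A)ᵀ * B * (c • A) = (c * c) • (Aᵀ * B * A) := by
  rw [transpose_smul, smul_mul, smul_mul, Matrix.mul_smul, smul_smul]

theorem Matrix.transpose_smul_mul_smul {n R : Type*} [Fintype n] [DecidableEq n] [CommSemiring R]
    (c : R) (A : Matrix n n R) : (c • A)ᵀ * (c • A) = (c * c) • (Aᵀ * A) := by
  simpa using transpose_smul_mul_mul_smul c A 1

theorem Real.rpow_neg_half_mul_self {x : ℝ} (hx : 0 ≤ x) :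
    x ^ (-(1 / 2 : ℝ)) * x ^ (-(1 / 2 : ℝ)) = x⁻¹ := by
  rw [Real.rpow_neg hx, ← Real.sqrt_eq_rpow, ← mul_inv, Real.mul_self_sqrt hx]

/-- For `λ` with `λ² = tλ + 1`, the matrix
`S = (1+λ²)^(−1/2) • !![λ,1;1,−λ]` is orthogonal, its columns are eigenvectors
of the fusion matrix `N₁ = !![t,1;1,0]`, and `Sᵀ N₁ S = diag(λ, −λ⁻¹)`. -/
theorem smatrix_diagonalizes_fusion_matrix (t lam : ℝ)
    (hquad : lam ^ 2 = t * lam + 1) :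
    lam ≠ 0 ∧
    (!![t, 1; 1, 0] : Matrix (Fin 2) (Fin 2) ℝ).mulVec ![lam, 1] = lam • ![lam, 1] ∧
    (!![t, 1; 1, 0] : Matrix (Fin 2) (Fin 2) ℝ).mulVec ![1, -lam] =
      (-lam⁻¹) • ![1, -lam] ∧
    (((1 + lam ^ 2) ^ (-(1/2 : ℝ))) • (!![lam, 1; 1, -lam] : Matrix (Fin 2) (Fin 2) ℝ))ᵀ *
        (((1 + lam ^ 2) ^ (-(1/2 : ℝ))) • (!![lam, 1; 1, -lam] : Matrix (Fin 2) (Fin 2) ℝ)) = 1 ∧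
    (((1 + lam ^ 2) ^ (-(1/2 : ℝ))) • (!![lam, 1; 1, -lam] : Matrix (Fin 2) (Fin 2) ℝ))ᵀ *
        !![t, 1; 1, 0] *
        (((1 + lam ^ 2) ^ (-(1/2 : ℝ))) • (!![lam, 1; 1, -lam] : Matrix (Fin 2) (Fin 2) ℝ)) =
      !![lam, 0; 0, -lam⁻¹] := by
  have hnorm :
      (1 + lam ^ 2) ^ (-(1 / 2 : ℝ)) * (1 + lam ^ 2) ^ (-(1 / 2 : ℝ)) * (1 + lam ^ 2) = 1 := by
    rw [Real.rpow_neg_half_mul_self (by positivity), inv_mul_cancel₀ (by positivity)]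
  refine ⟨ne_zero_of_sq_eq_mul_add_one hquad, fusion_mulVec_root hquad,
    fusion_mulVec_neg_inv_root hquad, ?_, ?_⟩
  · rw [transpose_smul_mul_smul, eigenvectors_transpose_mul_self, smul_smul, hnorm, one_smul]
  · rw [transpose_smul_mul_mul_smul, Matrix.mul_assoc, fusion_mul_eigenvectors hquad,
      ← Matrix.mul_assoc, eigenvectors_transpose_mul_self, smul_mul, Matrix.one_mul, smul_smul,
      hnorm, one_smul]
end
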